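/- arXiv:math/9403201 — 4 statements merged into one kernel-verified Lean document; each statement's English description precedes it below -/
import Mathlib

section
/- If 𝒪 is a maximal off-branch family in ω^{<ω}, then the pullback family 𝒪̄ = {A ∩ 2^{<ω} : A ∈ 𝒪 and A ∩ 2^{<ω} is infinite} is a maximal off-binary family in the binary tree 2^{<ω}. -/
/-- A branch of the tree `ω^{<ω}` is a maximal chain in the initial-segment order. -/
def IsBranch (b : Set (List ℕ)) : Prop := IsMaxChain (· <+: ·) b

/-- A set of nodes is off-branch if it meets every branch in a finite set. -/
def OffBranch (A : Set (List ℕ)) : Prop := ∀ b, IsBranch b → (A ∩ b).Finite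

/-- An off-branch family: an almost disjoint family of infinite off-branch sets. -/
def OffBranchFam (𝒪 : Set (Set (List ℕ))) : Prop :=
  (∀ A ∈ 𝒪, A.Infinite ∧ OffBranch A) ∧
  𝒪.Pairwise (fun A B => (A ∩ B).Finite)

/-- A maximal off-branch family. -/
def MaxOffBranchFam (𝒪 : Set (Set (List ℕ))) : Prop :=
  OffBranchFam 𝒪 ∧
  ∀ B : Set (List ℕ), B.Infinite → OffBranch B → ∃ A ∈ 𝒪, (B ∩ A).Infinite

/-- The binary subtree `2^{<ω} ⊆ ω^{<ω}`: sequences of 0's and 1's. -/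
def Bin : Set (List ℕ) := {σ | ∀ x ∈ σ, x ≤ 1}

/-- A branch of the binary subtree: a chain contained in `2^{<ω}` which is
maximal among chains contained in `2^{<ω}`. -/
def IsBinBranch (b : Set (List ℕ)) : Prop :=
  b ⊆ Bin ∧ IsChain (· <+: ·) b ∧
  ∀ c, c ⊆ Bin → IsChain (· <+: ·) c → b ⊆ c → b = c

/-- A set of binary nodes is off-binary if it meets every branch of `2^{<ω}` finitely. -/
def OffBinary (A : Set (List ℕ)) : Prop :=
  A ⊆ Bin ∧ ∀ b, IsBinBranch b → (A ∩ b).Finite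

/-- An off-binary family: an almost disjoint family of infinite off-binary sets. -/
def OffBinaryFam (𝒪 : Set (Set (List ℕ))) : Prop :=
  (∀ A ∈ 𝒪, A.Infinite ∧ OffBinary A) ∧
  𝒪.Pairwise (fun A B => (A ∩ B).Finite)

/-- A maximal off-binary family. -/
def MaxOffBinaryFam (𝒪 : Set (Set (List ℕ))) : Prop :=
  OffBinaryFam 𝒪 ∧
  ∀ B : Set (List ℕ), B.Infinite → OffBinary B → ∃ A ∈ 𝒪, (B ∩ A).Infinite

/-- Any chain contained in `Bin` extends to a binary branch. -/
lemma exists_binBranch (s : Set (List ℕ)) (hsB : s ⊆ Bin)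
    (hsc : IsChain (· <+: ·) s) : ∃ b, IsBinBranch b ∧ s ⊆ b := by
  have H := zorn_subset_nonempty {c : Set (List ℕ) | c ⊆ Bin ∧ IsChain (· <+: ·) c}
    ?_ s ⟨hsB, hsc⟩
  · obtain ⟨M, hsM, hM⟩ := H
    refine ⟨M, ⟨hM.prop.1, hM.prop.2, fun c hcB hcc hMc => (hM.eq_of_subset ⟨hcB, hcc⟩ hMc)⟩, hsM⟩
  rintro cs hcs₀ hcs₁ ⟨t, ht⟩
  refine ⟨⋃₀ cs, ⟨fun x ⟨u, hu, hxu⟩ => (hcs₀ hu).1 hxu, ?_⟩, fun _ => Set.subset_sUnion_of_mem⟩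
  rintro y ⟨sy, hsy, hysy⟩ z ⟨sz, hsz, hzsz⟩ hyz
  rcases eq_or_ne sy sz with rfl | hne
  · exact (hcs₀ hsy).2 hysy hzsz hyz
  rcases hcs₁ hsy hsz hne with h | h
  · exact (hcs₀ hsz).2 (h hysy) hzsz hyz
  · exact (hcs₀ hsy).2 hysy (h hzsz) hyz


/-- If `𝒪` is a maximal off-branch family, then the family of infinite traces
`A ∩ 2^{<ω}` (for `A ∈ 𝒪`) is a maximal off-binary family in `2^{<ω}`. -/
theorem pullback_max_offBranch_to_offBinary (𝒪 : Set (Set (List ℕ)))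
    (h𝒪 : MaxOffBranchFam 𝒪) :
    MaxOffBinaryFam {B | ∃ A ∈ 𝒪, B = A ∩ Bin ∧ (A ∩ Bin).Infinite} := by
  obtain ⟨⟨hmem, hpair⟩, hmax⟩ := h𝒪
  constructor
  · constructor
    · rintro X ⟨A, hA, rfl, hinf⟩
      refine ⟨hinf, Set.inter_subset_right, fun b hb => ?_⟩
      obtain ⟨b', hb', hbb'⟩ := hb.2.1.exists_maxChain
      exact ((hmem A hA).2 b' hb').subset fun x ⟨hxA, hxb⟩ => ⟨hxA.1, hbb' hxb⟩
    · rintro X ⟨A, hA, rfl, _⟩ Y ⟨B, hB, rfl, _⟩ hXY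
      have hAB : A ≠ B := fun h => hXY (by rw [h])
      exact (hpair hA hB hAB).subset fun x ⟨hx1, hx2⟩ => ⟨hx1.1, hx2.1⟩
  · intro B hBinf ⟨hBsub, hBoff⟩
    have hBoffbr : OffBranch B := by
      intro b hb
      obtain ⟨c, hc, hbc⟩ := exists_binBranch (b ∩ Bin)
        Set.inter_subset_right (hb.1.mono Set.inter_subset_left)
      exact (hBoff c hc).subset fun x ⟨hxB, hxb⟩ => ⟨hxB, hbc ⟨hxb, hBsub hxB⟩⟩
    obtain ⟨A, hA, hBA⟩ := hmax B hBinf hBoffbr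
    have hEq : B ∩ A = B ∩ (A ∩ Bin) := by
      ext x; exact ⟨fun ⟨h1, h2⟩ => ⟨h1, h2, hBsub h1⟩, fun ⟨h1, h2, _⟩ => ⟨h1, h2⟩⟩
    refine ⟨A ∩ Bin, ⟨A, hA, rfl, ?_⟩, ?_⟩
    · exact (hBA.mono (hEq ▸ Set.inter_subset_right)).mono (le_refl _)
    · rwa [← hEq]
end

section
/- 𝔬 = 𝔬_d, where 𝔬 is the minimum size of a maximal off-branch family and 𝔬_d is the minimum size of a family 𝒪 such that for some decomposition 𝒟 of ω^{<ω} into infinite off-branch sets, 𝒪 ∪ 𝒟 is a maximal off-branch family. -/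
/-- A decomposition of `ω^{<ω}`: a partition into infinitely many pairwise disjoint
infinite sets. -/
def Decomposition (𝒟 : Set (Set (List ℕ))) : Prop :=
  𝒟.Infinite ∧ (∀ D ∈ 𝒟, D.Infinite) ∧
  𝒟.Pairwise (fun D E => Disjoint D E) ∧ ⋃₀ 𝒟 = Set.univ

/-- `𝔬`: the least cardinality of a maximal off-branch family. -/
noncomputable def frakO : Cardinal :=
  sInf {c | ∃ 𝒪 : Set (Set (List ℕ)), MaxOffBranchFam 𝒪 ∧ Cardinal.mk ↥𝒪 = c}

/-- `𝔬_d`: the least cardinality of a family `𝒪` such that for some decomposition `𝒟`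
of `ω^{<ω}` into infinite off-branch sets, `𝒪 ∪ 𝒟` is a maximal off-branch family. -/
noncomputable def frakOd : Cardinal :=
  sInf {c | ∃ 𝒪 𝒟 : Set (Set (List ℕ)), Decomposition 𝒟 ∧ (∀ D ∈ 𝒟, OffBranch D) ∧
    MaxOffBranchFam (𝒪 ∪ 𝒟) ∧ Cardinal.mk ↥𝒪 = c}

/-! Every maximal off-branch family is uncountable: given countably many off-branch sets `f m`,
choose on the branch of the constant sequence `k` a node `k :: k :: ⋯ :: k` outside
`f 0, …, f k`; these nodes have distinct first entries, so they form an infinite antichain, hence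
an off-branch set almost disjoint from every `f m`. So adding a countable decomposition `𝒟` does
not change the cardinality of `𝒪`, which gives `𝔬 ≤ 𝔬_d`.

Conversely, take a maximal family of size `𝔬` and countably many distinct members `A n` of it.
In the countable tree they can be changed finitely into a partition (add the `n`-th node to `A n`,
then apply `disjointed`), and replacing the `A n` by this partition keeps the family maximal, so
`𝔬_d ≤ 𝔬`. -/

open Set Function
open scoped Cardinal

section

variable {α : Type*}

lemma Set.Finite.inter_of_finite_sdiff {X A D : Set α} (hXA : (X ∩ A).Finite)
    (hDA : (D \ A).Finite) : (X ∩ D).Finite :=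
  (hXA.union hDA).subset fun x ⟨hxX, hxD⟩ =>
    (em (x ∈ A)).imp (fun hxA => ⟨hxX, hxA⟩) fun hxA => ⟨hxD, hxA⟩

lemma finite_sdiff_disjointed {A : ℕ → Set α} (hA : Pairwise fun m n => (A m ∩ A n).Finite)
    (n : ℕ) : (A n \ disjointed A n).Finite := by
  refine ((finite_Iio n).biUnion fun j hj => hA (ne_of_gt hj)).subset ?_
  rintro x ⟨hxn, hxd⟩
  simp only [disjointed_eq_inter_compl, mem_inter_iff, mem_iInter, mem_compl_iff, not_and,
    not_forall, not_not] at hxd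
  obtain ⟨j, hj, hxj⟩ := hxd hxn
  exact mem_biUnion hj ⟨hxn, hxj⟩

lemma exists_partition_finite_symmDiff [Encodable α] {A : ℕ → Set α}
    (hA : Pairwise fun m n => (A m ∩ A n).Finite) :
    ∃ D : ℕ → Set α, Pairwise (Disjoint on D) ∧ ⋃ n, D n = Set.univ ∧
      ∀ n, (D n \ A n).Finite ∧ (A n \ D n).Finite := by
  set E : ℕ → Set α := fun n => {x | Encodable.encode x = n}
  have hE : ∀ n, (E n).Finite := fun n =>
    Subsingleton.finite fun x hx y hy => Encodable.encode_injective (hx.trans hy.symm)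
  set A' : ℕ → Set α := fun n => A n ∪ E n
  have hA' : Pairwise fun m n => (A' m ∩ A' n).Finite := fun m n hmn =>
    (((hA hmn).union (hE m)).union (hE n)).subset fun x ⟨hxm, hxn⟩ => by
      rcases hxm with hxm | hxm <;> rcases hxn with hxn | hxn <;> simp_all
  refine ⟨disjointed A', disjoint_disjointed A', ?_, fun n => ⟨?_, ?_⟩⟩
  · rw [iUnion_disjointed, eq_univ_iff_forall]
    exact fun x => mem_iUnion.2 ⟨Encodable.encode x, Or.inr rfl⟩
  · exact (hE n).subset fun x ⟨hxD, hxA⟩ => (disjointed_subset A' n hxD).resolve_left hxA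
  · exact (finite_sdiff_disjointed hA' n).subset (sdiff_subset_sdiff_left subset_union_left)

lemma countable_of_pairwiseDisjoint [Countable α] {𝒟 : Set (Set α)}
    (hd : 𝒟.PairwiseDisjoint id) (hne : ∀ D ∈ 𝒟, D.Nonempty) : 𝒟.Countable := by
  choose x hx using hne
  refine countable_coe_iff.mp (Function.Injective.countable (f := fun D : 𝒟 => x D D.2) ?_)
  intro D E (hDE : x D D.2 = x E E.2)
  exact Subtype.ext (hd.elim_set D.2 E.2 _ (hx D D.2) (hDE ▸ hx E E.2))

lemma mk_union_le_of_countable_right {s t : Set α} (ht : t.Countable)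
    (hst : ¬ (s ∪ t).Countable) : #(s ∪ t : Set α) ≤ #s := by
  have hs : Cardinal.aleph0 ≤ #s := by
    by_contra! hlt
    exact hst ((Cardinal.le_aleph0_iff_set_countable.mp hlt.le).union ht)
  calc #(s ∪ t : Set α) ≤ #s + #t := Cardinal.mk_union_le s t
    _ = #s := Cardinal.add_eq_left hs ((Cardinal.le_aleph0_iff_set_countable.mpr ht).trans hs)

end

lemma isBranch_range_replicate (k : ℕ) : IsBranch (range fun n => List.replicate n k) := by
  refine ⟨?_, fun c hc hsub => hsub.antisymm fun l hl => ⟨l.length, ?_⟩⟩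
  · rintro _ ⟨m, rfl⟩ _ ⟨n, rfl⟩ -
    rcases le_total m n with h | h
    · exact Or.inl (List.prefix_replicate_iff.2 ⟨by simpa using h, by simp⟩)
    · exact Or.inr (List.prefix_replicate_iff.2 ⟨by simpa using h, by simp⟩)
  · have hrep : List.replicate l.length k ∈ c := hsub ⟨l.length, rfl⟩
    by_contra hne
    rcases hc hrep hl hne with h | h
    · exact hne (h.eq_of_length (by simp))
    · exact hne (List.prefix_replicate_iff.1 h).2.symm

lemma isAntichain_range_cons (r : ℕ → List ℕ) :
    IsAntichain (· <+: ·) (range fun k => k :: r k) := by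
  rintro _ ⟨j, rfl⟩ _ ⟨k, rfl⟩ hne h
  obtain rfl : j = k := (List.cons_prefix_cons.1 h).1
  exact hne rfl

namespace OffBranch

variable {A B : Set (List ℕ)}

lemma mono (hB : OffBranch B) (hAB : A ⊆ B) : OffBranch A :=
  fun b hb => (hB b hb).subset (inter_subset_inter_left b hAB)

lemma union (hA : OffBranch A) (hB : OffBranch B) : OffBranch (A ∪ B) :=
  fun b hb => ((hA b hb).union (hB b hb)).subset (union_inter_distrib_right A B b).subset

lemma of_finite_sdiff (hA : OffBranch A) (hBA : (B \ A).Finite) : OffBranch B :=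
  (hA.union fun b _ => hBA.inter_of_left b).mono fun x hx =>
    (em (x ∈ A)).imp id fun hxA => ⟨hx, hxA⟩

lemma finite_setOf_replicate_mem (hA : OffBranch A) (k : ℕ) :
    {n | List.replicate n k ∈ A}.Finite :=
  ((hA _ (isBranch_range_replicate k)).preimage (List.replicate_left_injective k).injOn).subset
    fun n hn => ⟨hn, n, rfl⟩

end OffBranch

lemma IsAntichain.offBranch {A : Set (List ℕ)} (hA : IsAntichain (· <+: ·) A) : OffBranch A :=
  fun _ hb => (inter_subsingleton_of_isAntichain_of_isChain hA hb.1).finite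

lemma exists_offBranch_inter_finite (f : ℕ → Set (List ℕ)) (hf : ∀ m, OffBranch (f m)) :
    ∃ B, B.Infinite ∧ OffBranch B ∧ ∀ m, (B ∩ f m).Finite := by
  have havoid : ∀ k, ∃ n, ∀ m ≤ k, k :: List.replicate n k ∉ f m := by
    intro k
    have hfin : (⋃ m ∈ Iic k, {n | List.replicate (n + 1) k ∈ f m}).Finite :=
      (finite_Iic k).biUnion fun m _ =>
        ((hf m).finite_setOf_replicate_mem k).preimage (f := (· + 1)) (add_left_injective 1).injOn
    obtain ⟨n, hn⟩ := hfin.exists_notMem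
    exact ⟨n, fun m hm hmem => hn (mem_biUnion hm hmem)⟩
  choose i hi using havoid
  refine ⟨range fun k => k :: List.replicate (i k) k,
    infinite_range_of_injective fun j k h => (List.cons.inj h).1,
    (isAntichain_range_cons _).offBranch, fun m => ?_⟩
  refine ((finite_Iio m).image fun k => k :: List.replicate (i k) k).subset ?_
  rintro _ ⟨⟨k, rfl⟩, hk⟩
  exact ⟨k, not_le.mp fun hmk => hi k m hmk hk, rfl⟩

lemma exists_maxOffBranchFam : ∃ 𝒪, MaxOffBranchFam 𝒪 := by
  obtain ⟨𝒪, h𝒪⟩ := zorn_subset {𝒪 | OffBranchFam 𝒪} fun c hc hchain =>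
    ⟨⋃₀ c, ⟨fun A ⟨_, h𝒪, hA⟩ => (hc h𝒪).1 A hA,
      hchain.pairwise_sUnion.2 fun _ h𝒪 => (hc h𝒪).2⟩, fun _ => subset_sUnion_of_mem⟩
  refine ⟨𝒪, h𝒪.prop, fun B hBinf hBoff => ?_⟩
  by_contra! hfin
  have hB : B ∉ 𝒪 := fun hB => hBinf (by simpa using hfin B hB)
  have hins : OffBranchFam (insert B 𝒪) :=
    ⟨forall_mem_insert.2 ⟨⟨hBinf, hBoff⟩, h𝒪.prop.1⟩,
      pairwise_insert.2 ⟨h𝒪.prop.2, fun A hA _ => ⟨hfin A hA, inter_comm B A ▸ hfin A hA⟩⟩⟩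
  exact hB (h𝒪.2 hins (subset_insert B 𝒪) (mem_insert B 𝒪))

namespace MaxOffBranchFam

variable {𝒪 : Set (Set (List ℕ))}

lemma not_countable (h𝒪 : MaxOffBranchFam 𝒪) : ¬ 𝒪.Countable := by
  intro hc
  obtain ⟨f, hf⟩ := (hc.insert ∅).exists_eq_range (insert_nonempty ∅ 𝒪)
  have hoff : ∀ m, OffBranch (f m) := fun m => by
    rcases (hf ▸ mem_range_self m : f m ∈ insert ∅ 𝒪) with h | h
    · exact h ▸ fun b _ => finite_empty.inter_of_left b
    · exact (h𝒪.1.1 _ h).2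
  obtain ⟨B, hBinf, hBoff, hBfin⟩ := exists_offBranch_inter_finite f hoff
  obtain ⟨A, hA, hBA⟩ := h𝒪.2 B hBinf hBoff
  obtain ⟨m, rfl⟩ : A ∈ range f := hf ▸ mem_insert_of_mem ∅ hA
  exact hBA (hBfin m)

lemma diff_range_union_range {A D : ℕ → Set (List ℕ)} (h𝒪 : MaxOffBranchFam 𝒪)
    (hA : ∀ n, A n ∈ 𝒪) (hD : Pairwise (Disjoint on D)) (hDA : ∀ n, (D n \ A n).Finite)
    (hAD : ∀ n, (A n \ D n).Finite) : MaxOffBranchFam ((𝒪 \ range A) ∪ range D) := by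
  obtain ⟨⟨hmem, hpair⟩, hmax⟩ := h𝒪
  have hDinf : ∀ n, (D n).Infinite := fun n hfin =>
    (hmem _ (hA n)).1 ((hfin.union (hAD n)).subset fun x hx => (em (x ∈ D n)).imp id (⟨hx, ·⟩))
  have hcross : ∀ X ∈ 𝒪 \ range A, ∀ n, (X ∩ D n).Finite := fun X ⟨hX, hXA⟩ n =>
    (hpair hX (hA n) fun h => hXA ⟨n, h.symm⟩).inter_of_finite_sdiff (hDA n)
  refine ⟨⟨?_, ?_⟩, fun B hBinf hBoff => ?_⟩
  · rintro X (⟨hX, -⟩ | ⟨n, rfl⟩)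
    · exact hmem X hX
    · exact ⟨hDinf n, (hmem _ (hA n)).2.of_finite_sdiff (hDA n)⟩
  · refine pairwise_union.2 ⟨hpair.mono sdiff_subset, ?_, ?_⟩
    · exact Pairwise.range_pairwise fun m n hmn =>
        show (D m ∩ D n).Finite from (hD hmn).inter_eq ▸ finite_empty
    · rintro X hX _ ⟨n, rfl⟩ -
      exact ⟨hcross X hX n, inter_comm X (D n) ▸ hcross X hX n⟩
  · obtain ⟨A₀, hA₀, hBA₀⟩ := hmax B hBinf hBoff
    by_cases hr : A₀ ∈ range A
    · obtain ⟨n, rfl⟩ := hr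
      exact ⟨D n, Or.inr ⟨n, rfl⟩, fun hfin => hBA₀ (hfin.inter_of_finite_sdiff (hAD n))⟩
    · exact ⟨A₀, Or.inl ⟨hA₀, hr⟩, hBA₀⟩

lemma exists_decomposition (h𝒪 : MaxOffBranchFam 𝒪) :
    ∃ 𝒪' ⊆ 𝒪, ∃ 𝒟, Decomposition 𝒟 ∧ (∀ D ∈ 𝒟, OffBranch D) ∧ MaxOffBranchFam (𝒪' ∪ 𝒟) := by
  have hinf : 𝒪.Infinite := fun hfin => h𝒪.not_countable hfin.countable
  set e := Set.Infinite.natEmbedding 𝒪 hinf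
  set A : ℕ → Set (List ℕ) := fun n => e n
  have hA : ∀ n, A n ∈ 𝒪 := fun n => (e n).2
  have hAinj : A.Injective := fun m n h => e.injective (Subtype.ext h)
  obtain ⟨D, hD, hcover, hDA⟩ := exists_partition_finite_symmDiff (h𝒪.1.2.on_injective hAinj hA)
  have hmax := h𝒪.diff_range_union_range hA hD (fun n => (hDA n).1) fun n => (hDA n).2
  have hDmem : ∀ n, (D n).Infinite ∧ OffBranch (D n) := fun n => hmax.1.1 _ (Or.inr ⟨n, rfl⟩)
  have hDinj : D.Injective := fun m n h => by_contra fun hmn =>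
    let ⟨_, hx⟩ := (hDmem m).1.nonempty
    (hD hmn).ne_of_mem hx (h ▸ hx) rfl
  refine ⟨_, sdiff_subset, range D, ⟨infinite_range_of_injective hDinj, ?_, ?_, ?_⟩, ?_, hmax⟩
  · exact forall_mem_range.2 fun n => (hDmem n).1
  · exact hD.range_pairwise
  · rwa [sUnion_range]
  · exact forall_mem_range.2 fun n => (hDmem n).2

end MaxOffBranchFam

lemma Decomposition.countable {𝒟 : Set (Set (List ℕ))} (h𝒟 : Decomposition 𝒟) : 𝒟.Countable :=
  countable_of_pairwiseDisjoint h𝒟.2.2.1 fun D hD => (h𝒟.2.1 D hD).nonempty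

lemma frakO_le_mk_of_decomposition {𝒪 𝒟 : Set (Set (List ℕ))} (h𝒟 : Decomposition 𝒟)
    (hmax : MaxOffBranchFam (𝒪 ∪ 𝒟)) : frakO ≤ #𝒪 :=
  (csInf_le' (by exact ⟨_, hmax, rfl⟩)).trans
    (mk_union_le_of_countable_right h𝒟.countable hmax.not_countable)

/-- `𝔬 = 𝔬_d`. -/
theorem frakO_eq_frakOd : frakO = frakOd := by
  obtain ⟨𝒪₀, h𝒪₀⟩ := exists_maxOffBranchFam
  obtain ⟨𝒪, h𝒪, h𝒪card⟩ :=
    csInf_mem (s := {c | ∃ 𝒪 : Set (Set (List ℕ)), MaxOffBranchFam 𝒪 ∧ #𝒪 = c}) ⟨_, 𝒪₀, h𝒪₀, rfl⟩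
  obtain ⟨𝒪', h𝒪', 𝒟, h𝒟, h𝒟off, hmax⟩ := h𝒪.exists_decomposition
  refine le_antisymm (le_csInf ⟨_, 𝒪', 𝒟, h𝒟, h𝒟off, hmax, rfl⟩ ?_) ?_
  · rintro _ ⟨𝒪₂, 𝒟₂, h𝒟₂, -, hmax₂, rfl⟩
    exact frakO_le_mk_of_decomposition h𝒟₂ hmax₂
  · calc frakOd ≤ #𝒪' := csInf_le' ⟨𝒪', 𝒟, h𝒟, h𝒟off, hmax, rfl⟩
      _ ≤ #𝒪 := Cardinal.mk_le_mk_of_subset h𝒪'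
      _ = frakO := h𝒪card
end

section
/- If an antichain O in ω^{<ω} is transformed to Ō = {(n,i) : ∃σ ∈ O ∩ b_n, length(σ) = i}, where b_n is a branch containing ⟨n⟩, then Ō intersects each column {n}×ω of ω×ω in at most one point. Consequently 𝔞_s ≤ 𝔬̄. -/
/-- `Ō = {(n,i) : ∃ σ ∈ O ∩ b_n with length σ = i}`. -/
def obar (O : Set (List ℕ)) (b : ℕ → Set (List ℕ)) : Set (ℕ × ℕ) :=
  {p | ∃ σ ∈ O ∩ b p.1, σ.length = p.2}

/-- The `n`-th column `{n} × ω` of `ω × ω`. -/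
def Column (n : ℕ) : Set (ℕ × ℕ) := {p | p.1 = n}

/-- Families witnessing `𝔞_s`: maximal almost disjoint families of subsets of `ω × ω`
each of which is infinite and meets every column at most once (so each member may be
viewed as an infinite partial function `ω ⇀ ω`, almost disjoint from every column). -/
def MadFnFam (𝒜 : Set (Set (ℕ × ℕ))) : Prop :=
  (∀ A ∈ 𝒜, A.Infinite ∧ ∀ n, (A ∩ Column n).Subsingleton) ∧
  𝒜.Pairwise (fun A B => (A ∩ B).Finite) ∧
  ∀ B : Set (ℕ × ℕ), B.Infinite → (∀ n, (B ∩ Column n).Subsingleton) →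
    ∃ A ∈ 𝒜, (B ∩ A).Infinite

/-- `𝔞_s`: the least cardinality of a maximal almost disjoint family of infinite
partial functions. -/
noncomputable def frakAs : Cardinal :=
  sInf {c | ∃ 𝒜 : Set (Set (ℕ × ℕ)), MadFnFam 𝒜 ∧ Cardinal.mk ↥𝒜 = c}

/-- Maximal almost disjoint families of infinite antichains of `ω^{<ω}`. -/
def MadAntichainFam (𝒪 : Set (Set (List ℕ))) : Prop :=
  (∀ A ∈ 𝒪, A.Infinite ∧ IsAntichain (· <+: ·) A) ∧
  𝒪.Pairwise (fun A B => (A ∩ B).Finite) ∧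
  ∀ B : Set (List ℕ), B.Infinite → IsAntichain (· <+: ·) B →
    ∃ A ∈ 𝒪, (B ∩ A).Infinite

/-- `𝔬̄`: the least cardinality of a maximal almost disjoint family of infinite
antichains of `ω^{<ω}`. -/
noncomputable def frakObar : Cardinal :=
  sInf {c | ∃ 𝒪 : Set (Set (List ℕ)), MadAntichainFam 𝒪 ∧ Cardinal.mk ↥𝒪 = c}

/-! An antichain of `ω^{<ω}` meets each branch `b_n` in at most one node, so `Ō` has at most one
point in each column.

For `𝔞_s ≤ 𝔬̄`, code `(n, i)` by the constant sequence `⟨n, …, n⟩` of length `i + 1`. Two codes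
are comparable exactly when they lie in the same column, so the code is an injection taking sets
meeting every column at most once to antichains, and pulling antichains back to such sets. Pulling
back a maximal almost disjoint family of infinite antichains and discarding the finite traces
gives a maximal almost disjoint family of infinite partial functions of no larger size. -/

def IsMadFamily {α : Type*} (P : Set α → Prop) (𝒜 : Set (Set α)) : Prop :=
  (∀ A ∈ 𝒜, A.Infinite ∧ P A) ∧
  𝒜.Pairwise (fun A B => (A ∩ B).Finite) ∧
  ∀ B : Set α, B.Infinite → P B → ∃ A ∈ 𝒜, (B ∩ A).Infinite

noncomputable def madNumber {α : Type*} (P : Set α → Prop) : Cardinal :=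
  sInf {c | ∃ 𝒜 : Set (Set α), IsMadFamily P 𝒜 ∧ Cardinal.mk ↥𝒜 = c}

section MadFamily

universe u

variable {α β : Type u}

theorem exists_isMadFamily (P : Set α → Prop) : ∃ 𝒜, IsMadFamily P 𝒜 := by
  let S : Set (Set (Set α)) :=
    {𝒜 | (∀ A ∈ 𝒜, A.Infinite ∧ P A) ∧ 𝒜.Pairwise (fun A B => (A ∩ B).Finite)}
  have hchain : ∀ c ⊆ S, IsChain (· ⊆ ·) c → ∃ ub ∈ S, ∀ s ∈ c, s ⊆ ub := by
    intro c hcS hc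
    refine ⟨⋃₀ c, ⟨?_, ?_⟩, fun s hs => Set.subset_sUnion_of_mem hs⟩
    · rintro A ⟨𝒜, h𝒜c, hA⟩
      exact (hcS h𝒜c).1 A hA
    · rintro A ⟨𝒜, h𝒜c, hA⟩ A' ⟨𝒜', h𝒜'c, hA'⟩ hne
      rcases hc.total h𝒜c h𝒜'c with h | h
      · exact (hcS h𝒜'c).2 (h hA) hA' hne
      · exact (hcS h𝒜c).2 hA (h hA') hne
  obtain ⟨𝒜, h𝒜⟩ := zorn_subset S hchain
  refine ⟨𝒜, h𝒜.prop.1, h𝒜.prop.2, fun B hBinf hB => ?_⟩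
  by_contra! hdisj
  have hBnotin : B ∉ 𝒜 := fun hB𝒜 => hBinf (by simpa using hdisj B hB𝒜)
  have hins : insert B 𝒜 ∈ S := by
    refine ⟨?_, h𝒜.prop.2.insert fun A hA _ =>
      ⟨hdisj A hA, by simpa [Set.inter_comm] using hdisj A hA⟩⟩
    rintro A (rfl | hA)
    exacts [⟨hBinf, hB⟩, h𝒜.prop.1 A hA]
  exact hBnotin (h𝒜.eq_of_subset hins (Set.subset_insert B 𝒜) ▸ Set.mem_insert B 𝒜)

variable {P : Set α → Prop} {Q : Set β → Prop} {e : α → β}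

theorem IsMadFamily.preimage (he : e.Injective) (hpre : ∀ O, Q O → P (e ⁻¹' O))
    (himg : ∀ B, P B → Q (e '' B)) {𝒪 : Set (Set β)} (h𝒪 : IsMadFamily Q 𝒪) :
    IsMadFamily P {A ∈ Set.preimage e '' 𝒪 | A.Infinite} := by
  obtain ⟨hmem, hpair, hmax⟩ := h𝒪
  refine ⟨?_, ?_, fun B hBinf hB => ?_⟩
  · rintro A ⟨⟨O, hO, rfl⟩, hinf⟩
    exact ⟨hinf, hpre O (hmem O hO).2⟩
  · rintro A ⟨⟨O, hO, rfl⟩, -⟩ A' ⟨⟨O', hO', rfl⟩, -⟩ hne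
    exact ((hpair hO hO' fun h => hne (h ▸ rfl)).preimage he.injOn : (e ⁻¹' (O ∩ O')).Finite)
  · obtain ⟨O, hO, hinf⟩ := hmax (e '' B) (hBinf.image he.injOn) (himg B hB)
    have hBO : (B ∩ e ⁻¹' O).Infinite := by
      rwa [← Set.image_inter_preimage, Set.infinite_image_iff he.injOn] at hinf
    exact ⟨e ⁻¹' O, ⟨⟨O, hO, rfl⟩, hBO.mono Set.inter_subset_right⟩, hBO⟩

theorem madNumber_le_of_injective (he : e.Injective) (hpre : ∀ O, Q O → P (e ⁻¹' O))
    (himg : ∀ B, P B → Q (e '' B)) : madNumber P ≤ madNumber Q := by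
  obtain ⟨𝒪₀, h𝒪₀⟩ := exists_isMadFamily Q
  obtain ⟨𝒪, h𝒪, hcard⟩ := csInf_mem (⟨_, 𝒪₀, h𝒪₀, rfl⟩ :
    {c | ∃ 𝒪 : Set (Set β), IsMadFamily Q 𝒪 ∧ Cardinal.mk ↥𝒪 = c}.Nonempty)
  calc madNumber P
      ≤ Cardinal.mk ↥{A ∈ Set.preimage e '' 𝒪 | A.Infinite} :=
        csInf_le' ⟨_, h𝒪.preimage he hpre himg, rfl⟩
    _ ≤ Cardinal.mk ↥𝒪 := (Cardinal.mk_le_mk_of_subset (Set.sep_subset _ _)).trans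
        Cardinal.mk_image_le
    _ = madNumber Q := hcard

end MadFamily

def replicateCode (p : ℕ × ℕ) : List ℕ := List.replicate (p.2 + 1) p.1

theorem replicateCode_prefix_iff {p q : ℕ × ℕ} :
    replicateCode p <+: replicateCode q ↔ p.1 = q.1 ∧ p.2 ≤ q.2 := by
  simp [replicateCode, List.prefix_replicate_iff, eq_comm, and_comm]

theorem replicateCode_injective : replicateCode.Injective := fun _ _ h =>
  have hpq := replicateCode_prefix_iff.1 (h ▸ List.prefix_refl _)
  have hqp := replicateCode_prefix_iff.1 (h ▸ List.prefix_refl _)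
  Prod.ext hpq.1 (le_antisymm hpq.2 hqp.2)

theorem isAntichain_image_replicateCode {B : Set (ℕ × ℕ)}
    (hB : ∀ n, (B ∩ Column n).Subsingleton) : IsAntichain (· <+: ·) (replicateCode '' B) := by
  rintro _ ⟨p, hp, rfl⟩ _ ⟨q, hq, rfl⟩ hne hpre
  exact hne (congrArg replicateCode
    (hB q.1 ⟨hp, (replicateCode_prefix_iff.1 hpre).1⟩ ⟨hq, rfl⟩))

theorem inter_column_subsingleton_preimage_replicateCode {O : Set (List ℕ)}
    (hO : IsAntichain (· <+: ·) O) (n : ℕ) :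
    (replicateCode ⁻¹' O ∩ Column n).Subsingleton := by
  rintro p ⟨hpO, hp⟩ q ⟨hqO, hq⟩
  have hcol : p.1 = q.1 := hp.trans hq.symm
  apply replicateCode_injective
  rcases le_total p.2 q.2 with h | h
  · exact hO.eq hpO hqO (replicateCode_prefix_iff.2 ⟨hcol, h⟩)
  · exact (hO.eq hqO hpO (replicateCode_prefix_iff.2 ⟨hcol.symm, h⟩)).symm

-- `frakAs` and `frakObar` unfold to `madNumber` of the column and antichain properties.
theorem frakAs_le_frakObar : frakAs ≤ frakObar :=
  madNumber_le_of_injective replicateCode_injective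
    (fun _ hO => inter_column_subsingleton_preimage_replicateCode hO)
    (fun _ hB => isAntichain_image_replicateCode hB)

theorem obar_inter_column_subsingleton {O : Set (List ℕ)} (hO : IsAntichain (· <+: ·) O)
    {b : ℕ → Set (List ℕ)} (hb : ∀ n, IsChain (· <+: ·) (b n)) (n : ℕ) :
    (obar O b ∩ Column n).Subsingleton := by
  rintro p ⟨⟨σ, hσ, hσp⟩, hp : p.1 = n⟩ q ⟨⟨τ, hτ, hτq⟩, hq : q.1 = n⟩
  subst hp
  have hστ : σ = τ := inter_subsingleton_of_isAntichain_of_isChain hO (hb p.1) hσ (hq ▸ hτ)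
  exact Prod.ext hq.symm (hσp ▸ hτq ▸ congrArg List.length hστ)

/-- If `O` is an antichain then `Ō` meets every column of `ω × ω` at most once;
consequently `𝔞_s ≤ 𝔬̄`. -/
theorem obar_antichain_and_frakAs_le_frakObar :
    (∀ O : Set (List ℕ), IsAntichain (· <+: ·) O →
      ∀ b : ℕ → Set (List ℕ), (∀ n, IsBranch (b n) ∧ [n] ∈ b n) →
      ∀ n, (obar O b ∩ Column n).Subsingleton) ∧
    frakAs ≤ frakObar :=
  ⟨fun _ hO _ hb => obar_inter_column_subsingleton hO fun n => (hb n).1.isChain,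
    frakAs_le_frakObar⟩
end

section
/- For any off-branch set A ⊆ ω^{<ω}, the set D_A = {σ ∈ ω^{<ω} : for all τ ∈ ω^{<ω}, rs(σ⌢τ) ∉ A} is dense open in the partial order ω^{<ω} ordered by reverse extension (p ≤ q iff q is an initial segment of p). -/
/-- The right-shift `rs⟨n₀,…,n_k⟩ = ⟨n₀,…,n_k + 1⟩`, incrementing the last entry. -/
def rs (σ : List ℕ) : List ℕ := σ.dropLast ++ [σ.getLastD 0 + 1]

/-- The set `D_A` of the paper. -/
def rsAvoiding (A : Set (List ℕ)) : Set (List ℕ) := {σ | ∀ τ, rs (σ ++ τ) ∉ A}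

lemma prefix_rs_append (π l : List ℕ) (hl : l ≠ []) : π <+: rs (π ++ l) := by
  unfold rs
  rw [List.dropLast_append_of_ne_nil hl, List.append_assoc]
  exact List.prefix_append _ _

lemma length_rs (ρ : List ℕ) (h : ρ ≠ []) : (rs ρ).length = ρ.length := by
  unfold rs
  simp [List.length_dropLast, Nat.sub_add_cancel (List.length_pos_iff.2 h)]

lemma exists_proper_extension_mem_of_append_not_mem_rsAvoiding {A : Set (List ℕ)}
    {τ : List ℕ} (n : ℕ) (h : τ ++ [n] ∉ rsAvoiding A) :
    ∃ ρ ∈ A, τ <+: ρ ∧ τ.length < ρ.length := by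
  obtain ⟨τ', hτ'⟩ : ∃ τ', rs (τ ++ [n] ++ τ') ∈ A := by
    simpa [rsAvoiding] using h
  rw [List.append_assoc] at hτ'
  refine ⟨_, hτ', prefix_rs_append τ _ (by simp), ?_⟩
  rw [length_rs _ (by simp)]
  simp

lemma exists_seq_of_forall_exists_proper_extension {A : Set (List ℕ)} {σ : List ℕ}
    (h : ∀ τ, σ <+: τ → ∃ ρ ∈ A, τ <+: ρ ∧ τ.length < ρ.length) :
    ∃ f : ℕ → List ℕ, ∀ n, f n <+: f (n + 1) ∧ (f n).length < (f (n + 1)).length ∧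
      f (n + 1) ∈ A := by
  choose g hgA hg_prefix hg_length using h
  let next : {τ // σ <+: τ} → {τ // σ <+: τ} := fun τ =>
    ⟨g τ.1 τ.2, τ.2.trans (hg_prefix τ.1 τ.2)⟩
  refine ⟨fun n => (next^[n] ⟨σ, List.prefix_rfl⟩).1, fun n => ?_⟩
  simp only [Function.iterate_succ_apply']
  exact ⟨hg_prefix _ _, hg_length _ _, hgA _ _⟩

lemma not_offBranch_of_seq {A : Set (List ℕ)} (f : ℕ → List ℕ)
    (hf : ∀ n, f n <+: f (n + 1) ∧ (f n).length < (f (n + 1)).length ∧ f (n + 1) ∈ A) :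
    ¬ OffBranch A := by
  intro hA
  have hmono : ∀ {m n}, m ≤ n → f m <+: f n := by
    intro m n h
    induction h with
    | refl => exact List.prefix_rfl
    | step _ ih => exact ih.trans (hf _).1
  have hchain : IsChain (· <+: ·) (Set.range f) := by
    rintro _ ⟨m, rfl⟩ _ ⟨n, rfl⟩ _
    exact (le_total m n).imp hmono hmono
  obtain ⟨b, hb, hsub⟩ := hchain.exists_maxChain
  have hlen : StrictMono fun n => (f n).length := strictMono_nat_of_lt_succ fun n => (hf n).2.1
  refine Set.infinite_of_injective_forall_mem (f := fun n => f (n + 1)) ?_ ?_ (hA b hb)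
  · exact fun m n hmn => Nat.succ_injective (hlen.injective (congrArg List.length hmn))
  · exact fun n => ⟨(hf n).2.2, hsub ⟨n + 1, rfl⟩⟩

lemma exists_prefix_mem_rsAvoiding {A : Set (List ℕ)} (hA : OffBranch A) (σ : List ℕ) :
    ∃ τ, σ <+: τ ∧ τ ∈ rsAvoiding A := by
  by_contra! hσ
  have hext : ∀ τ, σ <+: τ → ∃ ρ ∈ A, τ <+: ρ ∧ τ.length < ρ.length := fun τ hτ =>
    exists_proper_extension_mem_of_append_not_mem_rsAvoiding 0
      (hσ _ (hτ.trans (List.prefix_append _ _)))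
  obtain ⟨f, hf⟩ := exists_seq_of_forall_exists_proper_extension hext
  exact not_offBranch_of_seq f hf hA

lemma mem_rsAvoiding_of_prefix {A : Set (List ℕ)} {σ τ : List ℕ} (hσ : σ ∈ rsAvoiding A)
    (hστ : σ <+: τ) : τ ∈ rsAvoiding A := by
  obtain ⟨δ, rfl⟩ := hστ
  exact fun τ' => by
    rw [List.append_assoc]
    exact hσ (δ ++ τ')

/-- For an off-branch set `A`, the set `D_A = {σ : ∀ τ, rs(σ⌢τ) ∉ A}` is dense
and open in Cohen forcing, i.e. in `ω^{<ω}` ordered by reverse end-extension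
(`p ≤ q` iff `q` is an initial segment of `p`): every condition has an extension
in `D_A`, and `D_A` is closed under extension. -/
theorem DA_dense_open (A : Set (List ℕ)) (hA : OffBranch A) :
    (∀ σ : List ℕ, ∃ τ : List ℕ, σ <+: τ ∧ τ ∈ {σ | ∀ τ', rs (σ ++ τ') ∉ A}) ∧
    (∀ σ ∈ {σ : List ℕ | ∀ τ', rs (σ ++ τ') ∉ A}, ∀ τ, σ <+: τ →
      τ ∈ {σ | ∀ τ', rs (σ ++ τ') ∉ A}) :=
  ⟨exists_prefix_mem_rsAvoiding hA, fun _ hσ _ hστ => mem_rsAvoiding_of_prefix hσ hστ⟩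
end
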